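/- Let p and q be probability vectors on {1,…,n} and let u = (u_1,…,u_n) be independent random variables, each uniformly distributed on [0,1]. Let a = a(u) be the almost surely unique index j with p_j > 0 such that (−ln u_j)/p_j < (−ln u_i)/p_i for every i ≠ j with p_i > 0, and let b = b(u) be defined analogously with q in place of p. Then Pr[a = b] = Σ_{j : p_j > 0 and q_j > 0} 1 / (Σ_{i=1}^n max(p_i/p_j, q_i/q_j)). -/

import Mathlib

open MeasureTheory ProbabilityTheory


/-- B1: the exponential-race inequality in terms of rpow. -/
lemma gumbel_cond_iff {t s a b : ℝ} (ht : t ∈ Set.Ioo (0:ℝ) 1) (hs : s ∈ Set.Ioo (0:ℝ) 1)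
    (ha : 0 ≤ a) (hb : 0 < b) :
    (0 < a → (-Real.log t)/b < (-Real.log s)/a) ↔ s < t ^ (a/b) := by
  rcases ha.eq_or_lt with h0 | hpos
  · simp [← h0, Real.rpow_zero, hs.2]
  · have h1 : s < t ^ (a/b) ↔ Real.log s < (a/b) * Real.log t := by
      rw [← Real.log_rpow ht.1, Real.log_lt_log_iff hs.1 (Real.rpow_pos_of_pos ht.1 _)]
    rw [h1, div_mul_eq_mul_div, lt_div_iff₀ hb]
    simp only [hpos, forall_true_left]
    rw [div_lt_div_iff₀ hb hpos]
    constructor <;> intro h <;> nlinarith [h]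

/-- B2: comparing with max exponent, base in (0,1). -/
lemma gumbel_max_iff {t s a b : ℝ} (ht : t ∈ Set.Ioo (0:ℝ) 1) :
    s < t ^ max a b ↔ s < t ^ a ∧ s < t ^ b := by
  constructor
  · intro h
    exact ⟨h.trans_le (Real.rpow_le_rpow_of_exponent_ge ht.1 ht.2.le (le_max_left a b)),
           h.trans_le (Real.rpow_le_rpow_of_exponent_ge ht.1 ht.2.le (le_max_right a b))⟩
  · rintro ⟨h1, h2⟩
    rcases max_choice a b with he | he <;> rw [he] <;> assumption

lemma gumbel_meas_helper {n : ℕ} (j i : Fin n) (a b : ℝ) (P : Prop) :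
    MeasurableSet {x : Fin n → ℝ | P → (-Real.log (x j))/b < (-Real.log (x i))/a} := by
  classical
  by_cases h : P
  · simp only [h, forall_true_left]
    exact measurableSet_lt
      (((Real.measurable_log.comp (measurable_pi_apply j)).neg).div_const _)
      (((Real.measurable_log.comp (measurable_pi_apply i)).neg).div_const _)
  · simp [h]

lemma gumbel_pi_measure {n : ℕ} (j : Fin n) (c : Fin n → ℝ) (hc : ∀ i, 0 ≤ c i) (hcj : c j = 1) :
    Measure.pi (fun _ : Fin n => volume.restrict (Set.Icc (0:ℝ) 1))
      {x | x j ∈ Set.Ioo (0:ℝ) 1 ∧ ∀ i, i ≠ j → x i ∈ Set.Ioo 0 (x j ^ c i)}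
    = ENNReal.ofReal (1 / ∑ i, c i) := by
  classical
  set ν : Measure ℝ := volume.restrict (Set.Icc (0:ℝ) 1) with hνdef
  have hνIoo : ∀ r : ℝ, 0 < r → r ≤ 1 → ν (Set.Ioo 0 r) = ENNReal.ofReal r := by
    intro r h0 h1
    rw [hνdef, Measure.restrict_apply measurableSet_Ioo,
      Set.inter_eq_self_of_subset_left
        (Set.Ioo_subset_Icc_self.trans (Set.Icc_subset_Icc le_rfl h1)),
      Real.volume_Ioo, sub_zero]
  set C : ℝ := ∑ i, c i with hCdef
  have hC1 : 1 ≤ C := by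
    rw [hCdef, ← hcj]
    exact Finset.single_le_sum (fun i _ => hc i) (Finset.mem_univ j)
  have hC0 : 0 < C := lt_of_lt_of_le one_pos hC1
  set P : Fin n → Prop := fun i => i = j with hPdef
  have hd : (default : {i // P i}).1 = j := (default : {i // P i}).2
  set T₂ : Set (({i // P i} → ℝ) × ({i // ¬ P i} → ℝ)) :=
    {z | z.1 default ∈ Set.Ioo (0:ℝ) 1 ∧
      ∀ i : {i // ¬ P i}, z.2 i ∈ Set.Ioo 0 (z.1 default ^ c i.1)} with hT₂def
  have hf1 : Measurable fun z : ({i // P i} → ℝ) × ({i // ¬ P i} → ℝ) => z.1 default :=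
    (measurable_pi_apply default).comp measurable_fst
  have h2 : ∀ i : {i // ¬ P i},
      Measurable fun z : ({i // P i} → ℝ) × ({i // ¬ P i} → ℝ) => z.2 i :=
    fun i => (measurable_pi_apply i).comp measurable_snd
  have hT₂meas : MeasurableSet T₂ := by
    have hrw : T₂ = ((fun z : ({i // P i} → ℝ) × ({i // ¬ P i} → ℝ) => z.1 default) ⁻¹'
        (Set.Ioo 0 1)) ∩ ⋂ i : {i // ¬ P i},
          ({z | 0 < z.2 i} ∩ {z | z.2 i < z.1 default ^ c i.1}) := by
      ext z
      simp only [hT₂def, Set.mem_setOf_eq, Set.mem_inter_iff, Set.mem_preimage,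
        Set.mem_iInter, Set.mem_Ioo]
    rw [hrw]
    exact (hf1 measurableSet_Ioo).inter (MeasurableSet.iInter fun i =>
      (measurableSet_lt measurable_const (h2 i)).inter
        (measurableSet_lt (h2 i) (((Real.continuous_rpow_const (hc i.1)).measurable).comp hf1)))
  have hpre : {x : Fin n → ℝ | x j ∈ Set.Ioo (0:ℝ) 1 ∧ ∀ i, i ≠ j → x i ∈ Set.Ioo 0 (x j ^ c i)}
      = (MeasurableEquiv.piEquivPiSubtypeProd (fun _ : Fin n => ℝ) P) ⁻¹' T₂ := by
    ext x
    simp only [Set.mem_setOf_eq, Set.mem_preimage, hT₂def,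
      MeasurableEquiv.piEquivPiSubtypeProd, MeasurableEquiv.coe_mk,
      Equiv.piEquivPiSubtypeProd, Equiv.coe_fn_mk, hd]
    constructor
    · rintro ⟨h1, hrest⟩
      exact ⟨h1, fun i => hrest i.1 i.2⟩
    · rintro ⟨h1, hrest⟩
      exact ⟨h1, fun i hij => hrest ⟨i, hij⟩⟩
  rw [hpre, (measurePreserving_piEquivPiSubtypeProd (fun _ : Fin n => ν) P).measure_preimage
    hT₂meas.nullMeasurableSet]
  rw [Measure.prod_apply hT₂meas]
  set g : ℝ → ENNReal :=
    (Set.Ioo (0:ℝ) 1).indicator (fun t => ∏ i : {i // ¬ P i}, ENNReal.ofReal (t ^ c i.1))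
    with hgdef
  have hslice : ∀ y : {i // P i} → ℝ,
      (Measure.pi fun _ : {i // ¬ P i} => ν) (Prod.mk y ⁻¹' T₂) = g (y default) := by
    intro y
    by_cases hy : y default ∈ Set.Ioo (0:ℝ) 1
    · have hset : Prod.mk y ⁻¹' T₂ = Set.pi Set.univ (fun i : {i // ¬ P i} =>
          Set.Ioo 0 (y default ^ c i.1)) := by
        ext w
        simp only [Set.mem_preimage, hT₂def, Set.mem_setOf_eq, Set.mem_pi, Set.mem_univ,
          forall_true_left, true_and, hy]
      rw [hset, Measure.pi_pi, hgdef, Set.indicator_of_mem hy]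
      exact Finset.prod_congr rfl fun i _ => hνIoo _ (Real.rpow_pos_of_pos hy.1 _)
        (Real.rpow_le_one hy.1.le hy.2.le (hc i.1))
    · have hset : Prod.mk y ⁻¹' T₂ = ∅ := by
        ext w
        simp only [Set.mem_preimage, hT₂def, Set.mem_setOf_eq, Set.mem_empty_iff_false,
          iff_false, not_and]
        intro h1
        exact absurd h1 hy
      rw [hset, measure_empty, hgdef, Set.indicator_of_notMem hy]
  simp_rw [hslice]
  have hgmeas : Measurable g := by
    refine Measurable.indicator ?_ measurableSet_Ioo
    exact Finset.measurable_prod _ fun i _ =>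
      ENNReal.measurable_ofReal.comp (Real.continuous_rpow_const (hc i.1)).measurable
  have hmpU := measurePreserving_piUnique (fun _ : {i // P i} => ν)
  have hint : ∫⁻ y, g (y default) ∂(Measure.pi fun _ : {i // P i} => ν) = ∫⁻ t, g t ∂ν := by
    have := hmpU.lintegral_comp hgmeas
    simpa [MeasurableEquiv.piUnique] using this
  have hsum : ∑ i : {i // ¬ P i}, c i.1 = C - 1 := by
    have h1 : ∑ i : {i // ¬ P i}, c i.1 = ∑ i ∈ Finset.univ.erase j, c i := by
      rw [eq_comm]
      refine Finset.sum_subtype _ (fun x => ?_) c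
      simp [hPdef]
    rw [h1, eq_sub_iff_add_eq, ← hcj, hCdef]
    exact Finset.sum_erase_add _ c (Finset.mem_univ j)
  have hfinal : ∫⁻ t, g t ∂ν = ENNReal.ofReal (1 / C) := by
    rw [hgdef, lintegral_indicator measurableSet_Ioo _, hνdef,
      Measure.restrict_restrict measurableSet_Ioo,
      Set.inter_eq_self_of_subset_left Set.Ioo_subset_Icc_self]
    have hcong : ∀ t ∈ Set.Ioo (0:ℝ) 1,
        (∏ i : {i // ¬ P i}, ENNReal.ofReal (t ^ c i.1)) = ENNReal.ofReal (t ^ (C - 1)) := by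
      intro t ht
      rw [← ENNReal.ofReal_prod_of_nonneg (fun i _ => Real.rpow_nonneg ht.1.le _),
        ← Real.rpow_sum_of_pos ht.1, hsum]
    rw [setLIntegral_congr_fun measurableSet_Ioo hcong]
    have hInt : IntegrableOn (fun t : ℝ => t ^ (C - 1)) (Set.Ioo (0:ℝ) 1) := by
      have h1 : IntervalIntegrable (fun t : ℝ => t ^ (C - 1)) volume 0 1 :=
        intervalIntegral.intervalIntegrable_rpow' (by linarith)
      exact h1.1.mono_set Set.Ioo_subset_Ioc_self
    rw [← ofReal_integral_eq_lintegral_ofReal hInt]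
    · congr 1
      rw [← MeasureTheory.integral_Ioc_eq_integral_Ioo,
        ← intervalIntegral.integral_of_le zero_le_one,
        integral_rpow (Or.inl (by linarith))]
      rw [sub_add_cancel, Real.one_rpow, Real.zero_rpow (ne_of_gt hC0)]
      ring
    · filter_upwards [ae_restrict_mem measurableSet_Ioo] with t ht
      exact Real.rpow_nonneg ht.1.le _
  refine Eq.trans ?_ hfinal
  convert hint using 2
  congr!


/-- Collision probability of the Gumbel coupling: with shared i.i.d. uniforms
`u 1, …, u n` on `[0,1]`, Alice outputs the (a.s. unique) `j` with `p j > 0` strictly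
minimizing `(-ln (u i)) / p i` over the support of `p`, and Bob analogously with `q`.
Then `Pr[a = b] = ∑_{j : p j > 0 ∧ q j > 0} 1 / ∑ i, max (p i / p j) (q i / q j)`. -/
theorem stmt_10 (n : ℕ) (p q : Fin n → ℝ)
    (hp0 : ∀ i, 0 ≤ p i) (hp1 : ∑ i, p i = 1)
    (hq0 : ∀ i, 0 ≤ q i) (hq1 : ∑ i, q i = 1)
    {Ω : Type*} [MeasurableSpace Ω] (μ : Measure Ω) [IsProbabilityMeasure μ]
    (u : Fin n → Ω → ℝ) (hmeas : ∀ i, Measurable (u i))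
    (hindep : iIndepFun u μ)
    (hunif : ∀ i, Measure.map (u i) μ = volume.restrict (Set.Icc (0 : ℝ) 1)) :
    μ {ω | ∃ j : Fin n, 0 < p j ∧ 0 < q j ∧
        (∀ i, i ≠ j → 0 < p i →
          (-Real.log (u j ω)) / p j < (-Real.log (u i ω)) / p i) ∧
        (∀ i, i ≠ j → 0 < q i →
          (-Real.log (u j ω)) / q j < (-Real.log (u i ω)) / q i)}
      = ENNReal.ofReal
          (∑ j ∈ Finset.univ.filter (fun j : Fin n => 0 < p j ∧ 0 < q j),
            1 / ∑ i, max (p i / p j) (q i / q j)) := by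
  classical
  set ν : Measure ℝ := volume.restrict (Set.Icc (0:ℝ) 1) with hνdef
  set U : Ω → (Fin n → ℝ) := fun ω i => u i ω with hUdef
  have hUmeas : Measurable U := measurable_pi_iff.mpr hmeas
  have hlaw : Measure.map U μ = Measure.pi (fun _ : Fin n => ν) := by
    refine (Measure.pi_eq fun s hs => ?_).symm
    rw [Measure.map_apply hUmeas (MeasurableSet.univ_pi hs)]
    have hpre : U ⁻¹' Set.pi Set.univ s = ⋂ i ∈ Finset.univ, u i ⁻¹' s i := by
      ext ω
      simp [hUdef, Set.mem_pi]
    rw [hpre, hindep.measure_inter_preimage_eq_mul Finset.univ (fun i _ => hs i)]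
    refine Finset.prod_congr rfl fun i _ => ?_
    rw [← hunif i, Measure.map_apply (hmeas i) (hs i)]
  set c : Fin n → Fin n → ℝ := fun j i => max (p i / p j) (q i / q j) with hcdef
  have hcnn : ∀ j i, 0 ≤ c j i := fun j i =>
    le_max_of_le_left (div_nonneg (hp0 i) (hp0 j))
  -- the sets on the path space
  set S : Fin n → Set (Fin n → ℝ) := fun j =>
    {x | (∀ i, i ≠ j → 0 < p i → (-Real.log (x j)) / p j < (-Real.log (x i)) / p i) ∧
         (∀ i, i ≠ j → 0 < q i → (-Real.log (x j)) / q j < (-Real.log (x i)) / q i)} with hSdef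
  have hSmeas : ∀ j, MeasurableSet (S j) := by
    intro j
    have hA : ∀ (r : Fin n → ℝ), MeasurableSet
        {x : Fin n → ℝ | ∀ i, i ≠ j → 0 < r i →
          (-Real.log (x j)) / r j < (-Real.log (x i)) / r i} := by
      intro r
      have : {x : Fin n → ℝ | ∀ i, i ≠ j → 0 < r i →
          (-Real.log (x j)) / r j < (-Real.log (x i)) / r i}
          = ⋂ i, {x : Fin n → ℝ | (i ≠ j ∧ 0 < r i) →
            (-Real.log (x j)) / r j < (-Real.log (x i)) / r i} := by
        ext x
        simp only [Set.mem_setOf_eq, Set.mem_iInter, and_imp]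
      rw [this]
      exact MeasurableSet.iInter fun i => gumbel_meas_helper j i _ _ _
    exact (hA p).inter (hA q)
  set F := Finset.univ.filter (fun j : Fin n => 0 < p j ∧ 0 < q j) with hFdef
  have hEeq : {ω | ∃ j : Fin n, 0 < p j ∧ 0 < q j ∧
        (∀ i, i ≠ j → 0 < p i →
          (-Real.log (u j ω)) / p j < (-Real.log (u i ω)) / p i) ∧
        (∀ i, i ≠ j → 0 < q i →
          (-Real.log (u j ω)) / q j < (-Real.log (u i ω)) / q i)}
      = ⋃ j ∈ F, U ⁻¹' (S j) := by
    ext ω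
    simp only [Set.mem_setOf_eq, Set.mem_iUnion, Set.mem_preimage, hFdef, Finset.mem_filter,
      Finset.mem_univ, true_and, hSdef, hUdef]
    constructor
    · rintro ⟨j, h1, h2, h3, h4⟩
      exact ⟨j, ⟨h1, h2⟩, h3, h4⟩
    · rintro ⟨j, ⟨h1, h2⟩, h3, h4⟩
      exact ⟨j, h1, h2, h3, h4⟩
  rw [hEeq, measure_biUnion_finset ?hdisj (fun j _ => hUmeas (hSmeas j))]
  case hdisj =>
    intro j hj k hk hjk
    simp only [hFdef, Finset.coe_filter, Set.mem_setOf_eq, Finset.mem_univ, true_and] at hj hk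
    refine Set.disjoint_left.mpr fun ω h1 h2 => ?_
    simp only [Set.mem_preimage, hSdef, Set.mem_setOf_eq] at h1 h2
    exact lt_asymm (h1.1 k (Ne.symm hjk) hk.1) (h2.1 j hjk hj.1)
  have hterm : ∀ j ∈ F, μ (U ⁻¹' S j) = ENNReal.ofReal (1 / ∑ i, c j i) := by
    intro j hj
    simp only [hFdef, Finset.mem_filter, Finset.mem_univ, true_and] at hj
    obtain ⟨hpj, hqj⟩ := hj
    have hcjj : c j j = 1 := by
      simp [hcdef, div_self (ne_of_gt hpj), div_self (ne_of_gt hqj)]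
    rw [← Measure.map_apply hUmeas (hSmeas j), hlaw]
    have hGc : (Measure.pi fun _ : Fin n => ν)
        ({x : Fin n → ℝ | ∀ i, x i ∈ Set.Ioo (0:ℝ) 1}ᶜ) = 0 := by
      have hrw : {x : Fin n → ℝ | ∀ i, x i ∈ Set.Ioo (0:ℝ) 1}ᶜ
          = ⋃ i, Function.eval i ⁻¹' (Set.Ioo (0:ℝ) 1)ᶜ := by
        ext x
        simp [Function.eval, not_forall]
      rw [hrw]
      refine measure_iUnion_null fun i => Measure.pi_eval_preimage_null _ ?_
      rw [hνdef, Measure.restrict_apply measurableSet_Ioo.compl]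
      refine measure_mono_null (fun x hx => ?_) (Set.Finite.measure_zero
        ((Set.finite_singleton (1:ℝ)).insert 0) volume)
      rcases hx with ⟨hni, h0, h1⟩
      simp only [Set.mem_compl_iff, Set.mem_Ioo, not_and, not_lt] at hni
      rcases eq_or_lt_of_le h0 with he | hlt
      · exact Set.mem_insert_iff.mpr (Or.inl he.symm)
      · exact Set.mem_insert_iff.mpr (Or.inr (le_antisymm h1 (hni hlt)))
    rw [← measure_inter_conull hGc]
    have hinter : S j ∩ {x : Fin n → ℝ | ∀ i, x i ∈ Set.Ioo (0:ℝ) 1}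
        = {x | x j ∈ Set.Ioo (0:ℝ) 1 ∧ ∀ i, i ≠ j → x i ∈ Set.Ioo 0 (x j ^ c j i)} := by
      ext x
      simp only [Set.mem_inter_iff, hSdef, Set.mem_setOf_eq]
      constructor
      · rintro ⟨⟨h1, h2⟩, hG⟩
        refine ⟨hG j, fun i hij => ?_⟩
        refine ⟨(hG i).1, ?_⟩
        rw [hcdef]
        rw [gumbel_max_iff (hG j)]
        exact ⟨(gumbel_cond_iff (hG j) (hG i) (hp0 i) hpj).mp (h1 i hij),
               (gumbel_cond_iff (hG j) (hG i) (hq0 i) hqj).mp (h2 i hij)⟩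
      · rintro ⟨hxj, hrest⟩
        have hG : ∀ i, x i ∈ Set.Ioo (0:ℝ) 1 := by
          intro i
          rcases eq_or_ne i j with rfl | hij
          · exact hxj
          · refine ⟨(hrest i hij).1, lt_of_lt_of_le (hrest i hij).2 ?_⟩
            exact Real.rpow_le_one hxj.1.le hxj.2.le (hcnn j i)
        refine ⟨⟨fun i hij => ?_, fun i hij => ?_⟩, hG⟩
        · refine (gumbel_cond_iff (hG j) (hG i) (hp0 i) hpj).mpr ?_
          exact ((gumbel_max_iff hxj).mp ((hrest i hij).2)).1
        · refine (gumbel_cond_iff (hG j) (hG i) (hq0 i) hqj).mpr ?_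
          exact ((gumbel_max_iff hxj).mp ((hrest i hij).2)).2
    rw [hinter, hνdef]
    exact gumbel_pi_measure j (c j) (hcnn j) hcjj
  rw [Finset.sum_congr rfl hterm]
  rw [← ENNReal.ofReal_sum_of_nonneg]
  intro j hj
  refine one_div_nonneg.mpr (Finset.sum_nonneg fun i _ => hcnn j i)
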